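/- arXiv:1302.5261 — 4 statements merged into one kernel-verified Lean document; each statement's English description precedes it below -/
import Mathlib

section
/- For all integers l ≥ 1, −l ≤ m ≤ l, and all x ∈ (−1, 1), F_{lm}(x) = [−(l x + m) U_{lm}(x) + (2l + 1) ξ_{lm} U_{l−1,m}(x)] / (√(l(l+1)) √(1 − x^2)), where ξ_{lm} := √((l+m)(l−m)/((2l+1)(2l−1))). -/
open MeasureTheory

/-- The (unnormalized) associated Legendre function
`P_l^m(x) = ((−1)^m / (2^l l!)) (1 − x^2)^{m/2} (d/dx)^{l+m} (x^2 − 1)^l`. -/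
noncomputable def Plm (l m : ℤ) (x : ℝ) : ℝ :=
  ((-1 : ℝ) ^ m / ((2 : ℝ) ^ l * (l.toNat.factorial : ℝ))) *
    (1 - x ^ 2) ^ ((m : ℝ) / 2) *
    iteratedDeriv (l + m).toNat (fun y : ℝ => (y ^ 2 - 1) ^ l) x

/-- The normalization factor `c_{lm} = √((2l+1)/2 · (l−m)!/(l+m)!)`. -/
noncomputable def clm (l m : ℤ) : ℝ :=
  Real.sqrt ((2 * (l : ℝ) + 1) / 2 * ((l - m).toNat.factorial : ℝ) /
    ((l + m).toNat.factorial : ℝ))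

/-- The normalized associated Legendre function `U_{lm} = c_{lm} P_l^m`,
with the convention `U_{lm} = 0` when `|m| > l`. -/
noncomputable def Ulm (l m : ℤ) (x : ℝ) : ℝ :=
  if |m| ≤ l then clm l m * Plm l m x else 0

/-- The function of Sheppard and Török
`F_{lm}(x) = (1/√(l(l+1))) [√(1−x²) U_{lm}'(x) − (m/√(1−x²)) U_{lm}(x)]`. -/
noncomputable def Flm (l m : ℤ) (x : ℝ) : ℝ :=
  (1 / Real.sqrt ((l : ℝ) * ((l : ℝ) + 1))) *
    (Real.sqrt (1 - x ^ 2) * deriv (Ulm l m) x -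
      ((m : ℝ) / Real.sqrt (1 - x ^ 2)) * Ulm l m x)

/-- The factor `ξ_{lm} = √((l+m)(l−m)/((2l+1)(2l−1)))`. -/
noncomputable def xilm (l m : ℤ) : ℝ :=
  Real.sqrt (((l : ℝ) + m) * ((l : ℝ) - m) / ((2 * (l : ℝ) + 1) * (2 * (l : ℝ) - 1)))

/-!
Write `g = (x² - 1)^l`, `h = (x² - 1)^(l-1)` and `n = l + m`, so that `P_l^m` is a constant
times `(1 - x²)^(m/2) g⁽ⁿ⁾`. Differentiating the equation `(x² - 1) h' = 2(l-1) x h` and the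
identity `g' = 2l x h` with Leibniz's rule gives
`(x² - 1) g⁽ⁿ⁺¹⁾ = (2l - n) x g⁽ⁿ⁾ - 2ln h⁽ⁿ⁻¹⁾`, which is exactly the three-term recurrence
`(1 - x²) (P_l^m)' = (l + m) P_{l-1}^m - l x P_l^m`. After normalisation
(`(l + m) c_{lm} = (2l + 1) ξ_{lm} c_{l-1,m}`), and since `P_{l-1}^l = 0` while the factor
`l + m` kills the case `m = -l`, this becomes
`(1 - x²) U_{lm}' = -l x U_{lm} + (2l + 1) ξ_{lm} U_{l-1,m}`, and the formula for `F_{lm}` is this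
identity divided by `√(l(l+1)) √(1 - x²)`.
-/

open Nat

namespace Polynomial

variable {R : Type*} [CommRing R]

/-- Leibniz's rule applied `k` times to `(X² - 1) f' = c X f`; the truncated `k - 1` is harmless
since that term carries the factor `k`. -/
theorem sq_sub_one_mul_iterate_derivative_succ {f : R[X]} {c : R}
    (hf : (X ^ 2 - 1) * derivative f = C c * X * f) (k : ℕ) :
    (X ^ 2 - 1) * derivative^[k + 1] f =
      (C c - 2 * (k : R[X])) * X * derivative^[k] f +
        (k : R[X]) * (C c - (k : R[X]) + 1) * derivative^[k - 1] f := by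
  induction k with
  | zero => simpa using hf
  | succ k ih =>
    have hpred : (k : R[X]) * derivative^[k - 1 + 1] f = k * derivative^[k] f := by
      rcases k with _ | k <;> simp
    have h := congrArg derivative ih
    simp only [derivative_mul, derivative_sub, derivative_X_sq, derivative_one, derivative_C,
      derivative_natCast, derivative_X, derivative_add, derivative_ofNat, C_ofNat,
      ← Function.iterate_succ_apply' derivative, Nat.succ_eq_add_one] at h
    simp only [Nat.add_sub_cancel]
    push_cast
    linear_combination h + (C c - (k : R[X]) + 1) * hpred

theorem sq_sub_one_mul_derivative_sq_sub_one_pow (k : ℕ) :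
    (X ^ 2 - 1 : R[X]) * derivative ((X ^ 2 - 1) ^ k) = C (2 * k : R) * X * (X ^ 2 - 1) ^ k := by
  rcases k with _ | k
  · simp
  · simp [derivative_pow, C_ofNat]
    ring

theorem derivative_sq_sub_one_pow_succ (k : ℕ) :
    derivative ((X ^ 2 - 1 : R[X]) ^ (k + 1)) =
      ((2 * (k + 1) : ℕ) : R[X]) * ((X ^ 2 - 1) ^ k * X) := by
  simp [derivative_pow, C_ofNat]
  ring

theorem sq_sub_one_mul_iterate_derivative_sq_sub_one_pow_succ (k n : ℕ) :
    (X ^ 2 - 1 : R[X]) * derivative^[n + 1] ((X ^ 2 - 1) ^ (k + 1)) =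
      (2 * ((k : R[X]) + 1) - (n : R[X])) * X * derivative^[n] ((X ^ 2 - 1) ^ (k + 1)) -
        2 * ((k : R[X]) + 1) * (n : R[X]) * derivative^[n - 1] ((X ^ 2 - 1) ^ k) := by
  have hD : ∀ j, derivative^[j + 1] ((X ^ 2 - 1 : R[X]) ^ (k + 1)) =
      2 * ((k : R[X]) + 1) * (derivative^[j] ((X ^ 2 - 1) ^ k) * X +
        (j : R[X]) * derivative^[j - 1] ((X ^ 2 - 1) ^ k)) := by
    intro j
    rw [Function.iterate_succ_apply, derivative_sq_sub_one_pow_succ, iterate_derivative_natCast_mul,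
      iterate_derivative_mul_X, nsmul_eq_mul]
    push_cast
    ring
  rcases n with _ | n
  · rw [hD]
    simp only [Function.iterate_zero, id, Nat.cast_zero, pow_succ]
    ring
  · have hL := sq_sub_one_mul_iterate_derivative_succ
      (sq_sub_one_mul_derivative_sq_sub_one_pow (R := R) k) n
    rw [hD, hD]
    push_cast
    simp only [map_mul, map_natCast, C_ofNat] at hL ⊢
    linear_combination 2 * ((k : R[X]) + 1) * X * hL

theorem iterate_derivative_sq_sub_one_pow_eq_zero {k n : ℕ} (h : 2 * k < n) :
    derivative^[n] ((X ^ 2 - 1 : R[X]) ^ k) = 0 := by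
  refine iterate_derivative_eq_zero (natDegree_pow_le.trans_lt ?_)
  have : (X ^ 2 - 1 : R[X]).natDegree ≤ 2 := by compute_degree
  nlinarith

end Polynomial

open Polynomial

theorem Polynomial.iteratedDeriv_eval {𝕜 : Type*} [NontriviallyNormedField 𝕜] (p : 𝕜[X]) (n : ℕ) :
    iteratedDeriv n (fun x => p.eval x) = fun x => (derivative^[n] p).eval x := by
  induction n with
  | zero => simp
  | succ n ih =>
    rw [iteratedDeriv_succ, ih, Function.iterate_succ_apply']
    funext x
    exact Polynomial.deriv _

theorem Plm_eq_eval {l m : ℤ} {k n : ℕ} (hk : l = k) (hn : (l + m).toNat = n) :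
    Plm l m = fun x => (-1 : ℝ) ^ m / ((2 : ℝ) ^ l * (k ! : ℝ)) * (1 - x ^ 2) ^ ((m : ℝ) / 2) *
      (derivative^[n] ((X ^ 2 - 1 : ℝ[X]) ^ k)).eval x := by
  subst hk
  have hpow : (fun y : ℝ => (y ^ 2 - 1) ^ (k : ℤ)) = fun y => ((X ^ 2 - 1 : ℝ[X]) ^ k).eval y := by
    simp
  funext x
  rw [Plm, hn, hpow, iteratedDeriv_eval, Int.toNat_natCast]

theorem hasDerivAt_Plm {l m : ℤ} {k n : ℕ} (hk : l = k) (hn : (l + m).toNat = n) {x : ℝ}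
    (hx : 1 - x ^ 2 ≠ 0) :
    HasDerivAt (Plm l m) ((-1 : ℝ) ^ m / ((2 : ℝ) ^ l * (k ! : ℝ)) *
      (-(m * x) * (1 - x ^ 2) ^ ((m : ℝ) / 2 - 1) *
          (derivative^[n] ((X ^ 2 - 1 : ℝ[X]) ^ k)).eval x +
        (1 - x ^ 2) ^ ((m : ℝ) / 2) *
          (derivative^[n + 1] ((X ^ 2 - 1 : ℝ[X]) ^ k)).eval x)) x := by
  have hw := ((hasDerivAt_pow 2 x).const_sub 1).rpow_const (p := (m : ℝ) / 2) (Or.inl hx)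
  have hp := Polynomial.hasDerivAt (derivative^[n] ((X ^ 2 - 1 : ℝ[X]) ^ k)) x
  rw [← Function.iterate_succ_apply' derivative] at hp
  rw [Plm_eq_eval hk hn]
  simp only [mul_assoc]
  refine ((hw.mul hp).const_mul _).congr_deriv ?_
  push_cast
  ring

theorem one_sub_sq_mul_deriv_Plm {l m : ℤ} (hl : 1 ≤ l) (hm : -l ≤ m) {x : ℝ}
    (hx : 1 - x ^ 2 ≠ 0) :
    (1 - x ^ 2) * deriv (Plm l m) x = (l + m) * Plm (l - 1) m x - l * x * Plm l m x := by
  obtain ⟨k, rfl⟩ : ∃ k : ℕ, l = k + 1 := ⟨(l - 1).toNat, by omega⟩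
  obtain ⟨n, hn⟩ : ∃ n : ℕ, ((k : ℤ) + 1 + m).toNat = n := ⟨_, rfl⟩
  have hmn : (m : ℝ) = n - k - 1 := by
    have : m = n - k - 1 := by omega
    exact_mod_cast this
  have hk : ((k : ℤ) + 1) = ((k + 1 : ℕ) : ℤ) := by push_cast; ring
  rw [(hasDerivAt_Plm hk hn hx).deriv, Plm_eq_eval hk hn,
    Plm_eq_eval (k := k) (n := n - 1) (by ring) (by omega)]
  have hpoly := congrArg (eval x)
    (sq_sub_one_mul_iterate_derivative_sq_sub_one_pow_succ (R := ℝ) k n)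
  simp only [eval_mul, eval_sub, eval_pow, eval_X, eval_one, eval_natCast, eval_add,
    eval_ofNat] at hpoly
  have hw : (1 - x ^ 2) * (1 - x ^ 2) ^ ((m : ℝ) / 2 - 1) = (1 - x ^ 2) ^ ((m : ℝ) / 2) := by
    rw [Real.rpow_sub_one hx]
    field_simp
  have hA : (-1 : ℝ) ^ m / ((2 : ℝ) ^ ((k : ℤ) + 1 - 1) * (k ! : ℝ)) =
      2 * (k + 1) * ((-1 : ℝ) ^ m / ((2 : ℝ) ^ ((k : ℤ) + 1) * ((k + 1) ! : ℝ))) := by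
    rw [add_sub_cancel_right, zpow_add_one₀ two_ne_zero, Nat.factorial_succ]
    push_cast
    field_simp
  set A := (-1 : ℝ) ^ m / ((2 : ℝ) ^ ((k : ℤ) + 1) * ((k + 1) ! : ℝ))
  set w := (1 - x ^ 2) ^ ((m : ℝ) / 2)
  set E := (derivative^[n] ((X ^ 2 - 1 : ℝ[X]) ^ (k + 1))).eval x
  set H := (derivative^[n - 1] ((X ^ 2 - 1 : ℝ[X]) ^ k)).eval x
  push_cast
  linear_combination (-(m * x * A * E)) * hw - A * w * hpoly - ((k + 1 + m) * w * H) * hA -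
    (x * A * w * E + 2 * (k + 1) * A * w * H) * hmn

theorem Plm_eq_zero_of_lt {l m : ℤ} (hl : 0 ≤ l) (h : l < m) : Plm l m = 0 := by
  lift l to ℕ using hl with k
  funext x
  rw [Plm_eq_eval rfl rfl, iterate_derivative_sq_sub_one_pow_eq_zero (by omega)]
  simp

theorem cast_factorial_toNat {j : ℤ} (hj : 0 < j) :
    (j.toNat ! : ℝ) = j * ((j - 1).toNat ! : ℝ) := by
  obtain ⟨i, rfl⟩ : ∃ i : ℕ, j = i + 1 := ⟨(j - 1).toNat, by omega⟩
  rw [add_sub_cancel_right, show (i : ℤ) + 1 = ((i + 1 : ℕ) : ℤ) by push_cast; ring,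
    Int.toNat_natCast, Int.toNat_natCast, Nat.factorial_succ]
  push_cast
  ring

theorem add_mul_clm {l m : ℤ} (h : |m| < l) :
    ((l : ℝ) + m) * clm l m = (2 * (l : ℝ) + 1) * xilm l m * clm (l - 1) m := by
  obtain ⟨hm₁, hm₂⟩ := abs_lt.mp h
  have hp : (0 : ℝ) < l + m := by exact_mod_cast (by omega : (0 : ℤ) < l + m)
  have hn : (0 : ℝ) < l - m := by exact_mod_cast (by omega : (0 : ℤ) < l - m)
  have hl : (0 : ℝ) < 2 * l - 1 := by exact_mod_cast (by omega : (0 : ℤ) < 2 * l - 1)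
  have hfp := cast_factorial_toNat (j := l + m) (by omega)
  have hfn := cast_factorial_toNat (j := l - m) (by omega)
  have hl₀ : (0 : ℝ) < 2 * l + 1 := by linarith
  refine (sq_eq_sq₀ (mul_nonneg hp.le (Real.sqrt_nonneg _))
    (mul_nonneg (mul_nonneg hl₀.le (Real.sqrt_nonneg _)) (Real.sqrt_nonneg _))).mp ?_
  rw [mul_pow, mul_pow, mul_pow,
    Real.sq_sqrt (div_nonneg (mul_nonneg (by linarith) (Nat.cast_nonneg _)) (Nat.cast_nonneg _)),
    Real.sq_sqrt (div_nonneg (mul_nonneg (by push_cast; linarith) (Nat.cast_nonneg _))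
      (Nat.cast_nonneg _)),
    Real.sq_sqrt (div_nonneg (mul_nonneg hp.le hn.le) (mul_nonneg hl₀.le hl.le)),
    show l - 1 + m = l + m - 1 by ring, show l - 1 - m = l - m - 1 by ring, hfp, hfn]
  push_cast
  rw [show 2 * ((l : ℝ) - 1) + 1 = 2 * l - 1 by ring]
  -- the side condition in the normal form that `field_simp` looks for
  have hl' : (l : ℝ) * 2 - 1 ≠ 0 := by linarith
  field_simp

theorem mul_xilm_mul_Ulm_sub_one {l m : ℤ} (hl : 1 ≤ l) (hm : |m| ≤ l) (x : ℝ) :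
    (2 * (l : ℝ) + 1) * xilm l m * Ulm (l - 1) m x = clm l m * ((l + m) * Plm (l - 1) m x) := by
  rcases hm.lt_or_eq with hlt | heq
  · rw [Ulm, if_pos (by omega)]
    linear_combination (-Plm (l - 1) m x) * add_mul_clm hlt
  · rw [Ulm, if_neg (by omega), mul_zero]
    rcases abs_eq (by omega) |>.mp heq with rfl | rfl
    · rw [Plm_eq_zero_of_lt (by omega) (by omega)]
      simp
    · simp

theorem one_sub_sq_mul_deriv_Ulm {l m : ℤ} (hl : 1 ≤ l) (hm : |m| ≤ l) {x : ℝ}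
    (hx : 1 - x ^ 2 ≠ 0) :
    (1 - x ^ 2) * deriv (Ulm l m) x =
      -(l : ℝ) * x * Ulm l m x + (2 * (l : ℝ) + 1) * xilm l m * Ulm (l - 1) m x := by
  have hU : Ulm l m = fun y => clm l m * Plm l m y := funext fun y => if_pos hm
  rw [hU, deriv_const_mul_field, mul_xilm_mul_Ulm_sub_one hl hm]
  linear_combination clm l m * one_sub_sq_mul_deriv_Plm hl (abs_le.mp hm).1 hx

/-- Alternative expression of `F_{lm}` in terms of `U_{lm}` and `U_{l−1,m}`. -/
theorem Flm_eq_lower (l m : ℤ) (hl : 1 ≤ l) (hm₁ : -l ≤ m) (hm₂ : m ≤ l)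
    (x : ℝ) (hx : x ∈ Set.Ioo (-1 : ℝ) 1) :
    Flm l m x =
      (-((l : ℝ) * x + m) * Ulm l m x + (2 * (l : ℝ) + 1) * xilm l m * Ulm (l - 1) m x) /
        (Real.sqrt ((l : ℝ) * ((l : ℝ) + 1)) * Real.sqrt (1 - x ^ 2)) := by
  obtain ⟨hx₁, hx₂⟩ := hx
  have hs : 0 < 1 - x ^ 2 := by nlinarith
  have hl' : (0 : ℝ) < l := by exact_mod_cast hl
  have hrec := one_sub_sq_mul_deriv_Ulm hl (abs_le.mpr ⟨hm₁, hm₂⟩) hs.ne'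
  have : 0 < Real.sqrt (1 - x ^ 2) := Real.sqrt_pos.mpr hs
  have : 0 < Real.sqrt ((l : ℝ) * ((l : ℝ) + 1)) := Real.sqrt_pos.mpr (by positivity)
  rw [Flm, eq_div_iff (by positivity)]
  field_simp
  linear_combination hrec + deriv (Ulm l m) x * Real.mul_self_sqrt hs.le
end

section
/- Derivative recurrence (lowering form) for F_{lm}: for all integers l ≥ 1, −l ≤ m ≤ l, and all x ∈ (−1, 1), (1 − x^2) F_{lm}'(x) = −l (x − m/l^2) F_{lm}(x) + (2l + 1) ζ_{lm} F_{l−1,m}(x), where ζ_{lm} := (1/l)·√((l+1)(l−1)(l+m)(l−m)/((2l+1)(2l−1))) and F_{l'm} := 0 whenever l' < max(1, |m|). -/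
open MeasureTheory

/-- The factor `ζ_{lm} = (1/l)·√((l+1)(l−1)(l+m)(l−m)/((2l+1)(2l−1)))`. -/
noncomputable def zetalm (l m : ℤ) : ℝ :=
  (1 / (l : ℝ)) *
    Real.sqrt (((l : ℝ) + 1) * ((l : ℝ) - 1) * ((l : ℝ) + m) * ((l : ℝ) - m) /
      ((2 * (l : ℝ) + 1) * (2 * (l : ℝ) - 1)))

/-!
On `(-1, 1)`, writing `n = l + m` and `p_l = (X² - 1)^l`, Rodrigues' formula turns `F_{lm}`
into `(-1)^m κ_{l,n} (1 - x²)^((m-1)/2) Q_{l,n}(x)`, where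
`Q_{l,n} = (1 - X²) p_l^(n+1) - m (X + 1) p_l^(n)`. The recurrence then splits into a polynomial
identity between `Q_{l,n}` and `Q_{l-1,n-1}` and the identity
`(2l+1) ζ_{lm} κ_{l-1,n-1} = 2 (l+1) n κ_{l,n}` between the constants, which is checked on
squares. The polynomial identity follows from the Legendre equation satisfied by the derivatives
of `p_l`, once `p_l^(n+1)` and `(l - m) p_l^(n)` are expressed through the derivatives of
`p_{l-1}`. At the edges `m = ±l` and `l = 1` the factor `ζ_{lm}` vanishes, and so does the
lowered term.
-/

namespace Polynomial

section CommRing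

variable {R : Type*} [CommRing R]

noncomputable def rodriguesPoly (L : ℕ) : R[X] := (X ^ 2 - 1) ^ L

theorem derivative_rodriguesPoly_succ (L : ℕ) :
    derivative (rodriguesPoly (L + 1) : R[X]) = 2 * ((L : R[X]) + 1) * X * rodriguesPoly L := by
  rw [rodriguesPoly, rodriguesPoly, derivative_pow, Nat.add_sub_cancel, derivative_sub,
    derivative_X_sq, derivative_one, C_eq_natCast, C_ofNat]
  push_cast
  ring

theorem X_sq_sub_one_mul_derivative_rodriguesPoly (L : ℕ) :
    (X ^ 2 - 1) * derivative (rodriguesPoly L : R[X]) = 2 * (L : R[X]) * X * rodriguesPoly L := by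
  cases L with
  | zero => simp [rodriguesPoly]
  | succ K =>
    rw [derivative_rodriguesPoly_succ, rodriguesPoly, rodriguesPoly, pow_succ]
    push_cast
    ring

theorem iterate_derivative_rodriguesPoly_eq_zero {L k : ℕ} (h : 2 * L < k) :
    derivative^[k] (rodriguesPoly L : R[X]) = 0 := by
  refine iterate_derivative_eq_zero (natDegree_pow_le.trans_lt ?_)
  calc L * (X ^ 2 - 1 : R[X]).natDegree ≤ L * 2 :=
        Nat.mul_le_mul_left L (natDegree_sub_le_of_le (natDegree_X_pow_le 2) natDegree_one.le)
    _ < k := by omega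

theorem X_sq_sub_one_mul_iterate_derivative_rodriguesPoly (L n : ℕ) :
    (X ^ 2 - 1) * derivative^[n + 2] (rodriguesPoly L : R[X]) =
      2 * ((L : R[X]) - (n : R[X]) - 1) * X * derivative^[n + 1] (rodriguesPoly L) +
        ((n : R[X]) + 1) * (2 * (L : R[X]) - (n : R[X])) * derivative^[n] (rodriguesPoly L) := by
  induction n with
  | zero =>
    have h := congrArg derivative (X_sq_sub_one_mul_derivative_rodriguesPoly (R := R) L)
    simp only [derivative_mul, derivative_sub, derivative_X_sq, C_ofNat, derivative_one,
      derivative_X, derivative_natCast, derivative_ofNat] at h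
    simp only [Function.iterate_succ_apply', Function.iterate_zero_apply]
    push_cast at h ⊢
    linear_combination h
  | succ n ih =>
    have h := congrArg derivative ih
    simp only [derivative_mul, derivative_add, derivative_sub, derivative_X_sq, C_ofNat,
      derivative_one, derivative_X, derivative_natCast, derivative_ofNat] at h
    simp only [Function.iterate_succ_apply'] at h ⊢
    push_cast at h ⊢
    linear_combination h

theorem iterate_derivative_rodriguesPoly_succ (K n : ℕ) :
    derivative^[n + 2] (rodriguesPoly (K + 1) : R[X]) =
      2 * ((K : R[X]) + 1) * (X * derivative^[n + 1] (rodriguesPoly K) +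
        ((n : R[X]) + 1) * derivative^[n] (rodriguesPoly K)) := by
  induction n with
  | zero =>
    have h := congrArg derivative (derivative_rodriguesPoly_succ (R := R) K)
    simp only [derivative_mul, derivative_add, derivative_X, derivative_one,
      derivative_natCast, derivative_ofNat] at h
    simp only [Function.iterate_succ_apply', Function.iterate_zero_apply]
    push_cast at h ⊢
    linear_combination h
  | succ n ih =>
    have h := congrArg derivative ih
    simp only [derivative_mul, derivative_add, derivative_X, derivative_one,
      derivative_natCast, derivative_ofNat] at h
    simp only [Function.iterate_succ_apply'] at h ⊢
    push_cast at h ⊢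
    linear_combination h

theorem mul_iterate_derivative_rodriguesPoly_succ (K i : ℕ) :
    (2 * (K : R[X]) + 1 - (i : R[X])) * derivative^[i + 1] (rodriguesPoly (K + 1)) =
      2 * ((K : R[X]) + 1) * (((i : R[X]) + 1) * X * derivative^[i] (rodriguesPoly K) +
        (X ^ 2 - 1) * derivative^[i + 1] (rodriguesPoly K)) := by
  cases i with
  | zero =>
    have hK := X_sq_sub_one_mul_derivative_rodriguesPoly (R := R) K
    have hK1 := derivative_rodriguesPoly_succ (R := R) K
    simp only [Function.iterate_succ_apply', Function.iterate_zero_apply]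
    push_cast
    linear_combination (2 * (K : R[X]) + 1) * hK1 - 2 * ((K : R[X]) + 1) * hK
  | succ j =>
    have hK := X_sq_sub_one_mul_iterate_derivative_rodriguesPoly (R := R) K j
    have hK1 := iterate_derivative_rodriguesPoly_succ (R := R) K j
    push_cast
    linear_combination (2 * (K : R[X]) - (j : R[X])) * hK1 - 2 * ((K : R[X]) + 1) * hK

noncomputable def sheppardPoly (L n : ℕ) : R[X] :=
  (1 - X ^ 2) * derivative^[n + 1] (rodriguesPoly L) -
    ((n : R[X]) - (L : R[X])) * (X + 1) * derivative^[n] (rodriguesPoly L)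

theorem sheppardPoly_eq_zero {L n : ℕ} (h : 2 * L < n) : (sheppardPoly L n : R[X]) = 0 := by
  simp [sheppardPoly, iterate_derivative_rodriguesPoly_eq_zero h,
    iterate_derivative_rodriguesPoly_eq_zero (h.trans n.lt_succ_self)]

/- At `n = 0` the truncated index `n - 1` is harmless, being multiplied by `n`. -/
theorem sheppardPoly_recurrence (K n : ℕ) :
    ((K : R[X]) + 1) * ((1 - ((n : R[X]) - ((K : R[X]) + 1))) * X * sheppardPoly (K + 1) n +
        (1 - X ^ 2) * derivative (sheppardPoly (K + 1) n)) +
      (((K : R[X]) + 1) ^ 2 * X - ((n : R[X]) - ((K : R[X]) + 1))) * sheppardPoly (K + 1) n =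
    2 * ((K : R[X]) + 1) * ((K : R[X]) + 2) * (n : R[X]) * sheppardPoly K (n - 1) := by
  have ode := X_sq_sub_one_mul_iterate_derivative_rodriguesPoly (R := R) (K + 1) n
  simp only [sheppardPoly, derivative_mul, derivative_sub, derivative_add, derivative_one,
    derivative_X, derivative_X_sq, C_ofNat, derivative_natCast,
    ← Function.iterate_succ_apply' derivative]
  push_cast at ode ⊢
  set l : R[X] := (K : R[X]) + 1
  cases n with
  | zero =>
    have h := X_sq_sub_one_mul_derivative_rodriguesPoly (R := R) (K + 1)
    simp only [Function.iterate_succ_apply', Function.iterate_zero_apply] at ode ⊢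
    push_cast at h ⊢
    linear_combination l * (X ^ 2 - 1) * ode - (l + 1) * l * (X + 1) * h
  | succ i =>
    have hraise := iterate_derivative_rodriguesPoly_succ (R := R) K i
    have hlower := mul_iterate_derivative_rodriguesPoly_succ (R := R) K i
    set m : R[X] := (i : R[X]) + 1 - l
    push_cast at ode ⊢
    linear_combination l * (X ^ 2 - 1) * ode + (l + 1) * ((l * X - m) * (1 - X ^ 2) * hraise +
      (l * X ^ 2 - m * X - ((i : R[X]) + 1)) * hlower)

end CommRing

theorem iteratedDeriv_eval_s6 {𝕜 : Type*} [NontriviallyNormedField 𝕜] (p : 𝕜[X]) (n : ℕ) :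
    iteratedDeriv n (fun y => p.eval y) = fun y => (derivative^[n] p).eval y := by
  induction n with
  | zero => simp
  | succ n ih =>
    ext y
    rw [iteratedDeriv_succ, ih, Polynomial.deriv, Function.iterate_succ_apply']

end Polynomial

open Polynomial Set
open scoped Nat

theorem one_sub_sq_pos_of_mem_Ioo {y : ℝ} (hy : y ∈ Ioo (-1 : ℝ) 1) : 0 < 1 - y ^ 2 := by
  nlinarith [hy.1, hy.2]

theorem hasDerivAt_one_sub_sq_rpow_mul_eval (a : ℝ) (p : ℝ[X]) {y : ℝ}
    (hy : 1 - y ^ 2 ≠ 0) :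
    HasDerivAt (fun y => (1 - y ^ 2) ^ a * p.eval y)
      ((1 - y ^ 2) ^ (a - 1) * ((1 - y ^ 2) * (derivative p).eval y - 2 * a * y * p.eval y))
      y := by
  have hw : HasDerivAt (fun y : ℝ => 1 - y ^ 2) (-(2 * y)) y := by
    simpa using (hasDerivAt_pow 2 y).const_sub 1
  refine ((hw.rpow_const (Or.inl hy)).mul (p.hasDerivAt y)).congr_deriv ?_
  rw [show (1 - y ^ 2) ^ a = (1 - y ^ 2) ^ (a - 1) * (1 - y ^ 2) by
    rw [← Real.rpow_add_one hy, sub_add_cancel]]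
  ring

noncomputable def sheppardCoeff (L n : ℕ) : ℝ :=
  √((2 * L + 1) / 2 * (2 * L - n)! / n !) / (2 ^ L * L ! * √(L * (L + 1)))

section

variable {L n : ℕ} {m : ℤ}

theorem clm_eq_sqrt (hmn : (L : ℤ) + m = n) (hn : n ≤ 2 * L) :
    clm L m = √((2 * L + 1) / 2 * (2 * L - n)! / n !) := by
  rw [clm, show ((L : ℤ) - m).toNat = 2 * L - n by omega, show ((L : ℤ) + m).toNat = n by omega]
  push_cast
  rfl

theorem Ulm_eq_iterate_derivative (hmn : (L : ℤ) + m = n) (hn : n ≤ 2 * L) :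
    Ulm L m = fun y => (-1) ^ m * clm L m / (2 ^ L * L !) *
      ((1 - y ^ 2) ^ ((m : ℝ) / 2) * (derivative^[n] (rodriguesPoly L)).eval y) := by
  have hpoly : (fun y : ℝ => (y ^ 2 - 1) ^ (L : ℤ)) = fun y => (rodriguesPoly L).eval y := by
    ext y
    simp [rodriguesPoly]
  ext y
  rw [Ulm, if_pos (abs_le.2 ⟨by omega, by omega⟩), Plm, hpoly, iteratedDeriv_eval_s6,
    show ((L : ℤ) + m).toNat = n by omega, Int.toNat_natCast, zpow_natCast]
  ring

theorem Flm_eq_sheppardPoly (hmn : (L : ℤ) + m = n) (hn : n ≤ 2 * L) {y : ℝ}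
    (hy : y ∈ Ioo (-1 : ℝ) 1) :
    Flm L m y = (-1) ^ m * sheppardCoeff L n *
      ((1 - y ^ 2) ^ (((m : ℝ) - 1) / 2) * (sheppardPoly L n).eval y) := by
  have ht := one_sub_sq_pos_of_mem_Ioo hy
  have hU := (hasDerivAt_one_sub_sq_rpow_mul_eval ((m : ℝ) / 2)
    (derivative^[n] (rodriguesPoly L)) ht.ne').const_mul ((-1) ^ m * clm L m / (2 ^ L * L !))
  rw [← Ulm_eq_iterate_derivative hmn hn] at hU
  have hm : (n : ℝ) - L = m := by
    rw [sub_eq_iff_eq_add']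
    exact_mod_cast hmn.symm
  have hpow : (1 - y ^ 2) ^ ((m : ℝ) / 2) =
      (1 - y ^ 2) ^ (((m : ℝ) - 1) / 2) * √(1 - y ^ 2) := by
    rw [Real.sqrt_eq_rpow, ← Real.rpow_add ht]
    ring_nf
  rw [Flm, hU.deriv, Ulm_eq_iterate_derivative hmn hn, sheppardCoeff, ← clm_eq_sqrt hmn hn,
    sheppardPoly, Function.iterate_succ_apply']
  simp only [eval_sub, eval_mul, eval_add, eval_one, eval_pow, eval_X, eval_natCast, hm]
  push_cast
  rw [Real.rpow_sub_one ht.ne', hpow]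
  have hs : √(1 - y ^ 2) ^ 2 = 1 - y ^ 2 := Real.sq_sqrt ht.le
  have hs0 : √(1 - y ^ 2) ≠ 0 := (Real.sqrt_pos.2 ht).ne'
  set W := (1 - y ^ 2) ^ (((m : ℝ) - 1) / 2)
  set s := √(1 - y ^ 2)
  rw [← hs]
  field_simp
  ring

theorem one_sub_sq_mul_deriv_Flm (hmn : (L : ℤ) + m = n) (hn : n ≤ 2 * L) {x : ℝ}
    (hx : x ∈ Ioo (-1 : ℝ) 1) :
    (1 - x ^ 2) * deriv (Flm L m) x = (-1) ^ m * sheppardCoeff L n *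
      ((1 - x ^ 2) ^ (((m : ℝ) - 1) / 2) * ((1 - x ^ 2) * (derivative (sheppardPoly L n)).eval x -
        ((m : ℝ) - 1) * x * (sheppardPoly L n).eval x)) := by
  have ht := one_sub_sq_pos_of_mem_Ioo hx
  have hF : Flm L m =ᶠ[nhds x] fun y => (-1) ^ m * sheppardCoeff L n *
      ((1 - y ^ 2) ^ (((m : ℝ) - 1) / 2) * (sheppardPoly L n).eval y) :=
    Filter.eventually_of_mem (isOpen_Ioo.mem_nhds hx) fun y hy => Flm_eq_sheppardPoly hmn hn hy
  rw [hF.deriv_eq, ((hasDerivAt_one_sub_sq_rpow_mul_eval _ _ ht.ne').const_mul _).deriv,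
    Real.rpow_sub_one ht.ne']
  field_simp

end

theorem zetalm_eq_zero {l m : ℤ} (h : l = 1 ∨ m = -l ∨ m = l) : zetalm l m = 0 := by
  have : ((l : ℝ) - 1) * ((l : ℝ) + m) * ((l : ℝ) - m) = 0 := by
    rcases h with rfl | rfl | rfl <;> push_cast <;> ring
  rw [zetalm, show ((l : ℝ) + 1) * ((l : ℝ) - 1) * ((l : ℝ) + m) * ((l : ℝ) - m) =
    ((l : ℝ) + 1) * (((l : ℝ) - 1) * ((l : ℝ) + m) * ((l : ℝ) - m)) by ring, this]
  simp

theorem zetalm_mul_sheppardCoeff {K i : ℕ} {m : ℤ} (hK : 1 ≤ K) (hmi : (K : ℤ) + m = i)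
    (hi : i ≤ 2 * K) :
    (2 * (((K + 1 : ℕ) : ℤ) : ℝ) + 1) * zetalm (K + 1 : ℕ) m * sheppardCoeff K i =
      2 * ((K : ℝ) + 2) * ((i : ℝ) + 1) * sheppardCoeff (K + 1) (i + 1) := by
  obtain ⟨j, hj⟩ : ∃ j, 2 * K = i + j := ⟨2 * K - i, by omega⟩
  have hm : (m : ℝ) = i - K := by
    rw [eq_sub_iff_add_eq']
    exact_mod_cast hmi
  have hj' : ((2 * K : ℕ) : ℝ) = i + j := by exact_mod_cast hj
  rw [zetalm, sheppardCoeff, sheppardCoeff, show 2 * (K + 1) - (i + 1) = j + 1 by omega,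
    show 2 * K - i = j by omega, Nat.factorial_succ, Nat.factorial_succ, Nat.factorial_succ, hm]
  push_cast at hj' ⊢
  rw [show ((K : ℝ) + 1 + 1) * ((K : ℝ) + 1 - 1) * ((K : ℝ) + 1 + ((i : ℝ) - K)) *
      ((K : ℝ) + 1 - ((i : ℝ) - K)) = ((K : ℝ) + 2) * K * ((i : ℝ) + 1) * ((j : ℝ) + 1) by
    linear_combination ((K : ℝ) + 2) * K * ((i : ℝ) + 1) * hj',
    show 2 * ((K : ℝ) + 1) - 1 = 2 * K + 1 by ring]
  rw [← sq_eq_sq₀ (by positivity) (by positivity)]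
  simp (disch := positivity) only [mul_pow, div_pow, Real.sq_sqrt]
  field_simp
  ring

theorem zetalm_mul_Flm_sub_one {K n : ℕ} {m : ℤ} (hmn : ((K + 1 : ℕ) : ℤ) + m = n)
    (hn : n ≤ 2 * (K + 1)) {x : ℝ} (hx : x ∈ Ioo (-1 : ℝ) 1) :
    (2 * (((K + 1 : ℕ) : ℤ) : ℝ) + 1) * zetalm (K + 1 : ℕ) m * Flm ((K + 1 : ℕ) - 1) m x =
      (-1) ^ m * sheppardCoeff (K + 1) n * ((1 - x ^ 2) ^ (((m : ℝ) - 1) / 2) *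
        (2 * ((K : ℝ) + 2) * n * (sheppardPoly K (n - 1)).eval x)) := by
  rcases n with _ | i
  · rw [zetalm_eq_zero (by omega)]
    simp
  obtain rfl | ⟨rfl, rfl⟩ | ⟨hK, hi⟩ :
      i = 2 * K + 1 ∨ (K = 0 ∧ i = 0) ∨ (1 ≤ K ∧ i ≤ 2 * K) := by omega
  · rw [zetalm_eq_zero (by omega), Nat.add_sub_cancel, sheppardPoly_eq_zero (by omega)]
    simp
  · rw [zetalm_eq_zero (by omega)]
    simp [sheppardPoly, rodriguesPoly]
  · have hmi : (K : ℤ) + m = i := by omega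
    rw [show ((K + 1 : ℕ) : ℤ) - 1 = K by push_cast; ring, Flm_eq_sheppardPoly hmi hi hx,
      Nat.add_sub_cancel, Nat.cast_succ (R := ℝ) i]
    linear_combination
      ((-1) ^ m * (1 - x ^ 2) ^ (((m : ℝ) - 1) / 2) * (sheppardPoly K i).eval x) *
        zetalm_mul_sheppardCoeff hK hmi hi

/-- Derivative recurrence (lowering form) for `F_{lm}`.  (With the definition used
here, `F_{l'm} = 0` automatically whenever `l' < max(1, |m|)`.) -/
theorem Flm_deriv_recurrence_lower (l m : ℤ) (hl : 1 ≤ l) (hm₁ : -l ≤ m) (hm₂ : m ≤ l)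
    (x : ℝ) (hx : x ∈ Set.Ioo (-1 : ℝ) 1) :
    (1 - x ^ 2) * deriv (Flm l m) x =
      -(l : ℝ) * (x - (m : ℝ) / (l : ℝ) ^ 2) * Flm l m x +
        (2 * (l : ℝ) + 1) * zetalm l m * Flm (l - 1) m x := by
  lift l to ℕ using (by omega)
  obtain ⟨K, rfl⟩ : ∃ K, l = K + 1 := ⟨l - 1, by omega⟩
  obtain ⟨n, hmn⟩ : ∃ n : ℕ, ((K + 1 : ℕ) : ℤ) + m = n :=
    ⟨((K + 1 : ℕ) + m).toNat, by omega⟩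
  have hn : n ≤ 2 * (K + 1) := by omega
  have hnm : (n : ℝ) = K + 1 + m := by exact_mod_cast hmn.symm
  have hrec := congrArg (eval x) (sheppardPoly_recurrence (R := ℝ) K n)
  simp only [eval_add, eval_sub, eval_mul, eval_pow, eval_one, eval_X, eval_natCast, eval_ofNat,
    hnm] at hrec
  rw [one_sub_sq_mul_deriv_Flm hmn hn hx, zetalm_mul_Flm_sub_one hmn hn hx,
    Flm_eq_sheppardPoly hmn hn hx, hnm]
  push_cast
  linear_combination (norm := skip) ((-1) ^ m * sheppardCoeff (K + 1) n *
    (1 - x ^ 2) ^ (((m : ℝ) - 1) / 2) / ((K : ℝ) + 1)) * hrec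
  field_simp
  ring
end

section
/- Derivative recurrence (raising form) for F_{lm}: for all integers l ≥ 1, −l ≤ m ≤ l, and all x ∈ (−1, 1), (1 − x^2) F_{lm}'(x) = (l + 1) [x − m/(l+1)^2] F_{lm}(x) − (2l + 1) ζ_{l+1,m} F_{l+1,m}(x), where ζ_{lm} := (1/l)·√((l+1)(l−1)(l+m)(l−m)/((2l+1)(2l−1))). -/
open MeasureTheory

/-!
By Rodrigues' formula, `U_{lm}` is a constant multiple of `(1 - x²)^{m/2} w⁽ⁿ⁾` with
`w = (x² - 1)^l` and `n = l + m`, so on `(-1, 1)` the function `F_{lm}` is a constant times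
`(1 - x²)^{(m-1)/2} [(1 - x²) w⁽ⁿ⁺¹⁾ - m (1 + x) w⁽ⁿ⁾]`, and `F_{l+1,m}` has the same shape with
`(x² - 1)^{l+1}` and `n + 1`. After cancelling the common power of `1 - x²`, the recurrence is a
linear identity between derivatives of `(x² - 1)^l` and `(x² - 1)^{l+1}`; it follows from the
Leibniz rule applied to `(x² - 1) w' = 2 l x w`, `((x² - 1)^{l+1})' = 2 (l + 1) x w` and
`(x² - 1)^{l+1} = (x² - 1) w`. The normalising constants match because
`(2l + 1) ζ_{l+1,m} c_{l+1,m} / c_{lm}` is an explicit rational function of `l` and `m`, checked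
on squares.
-/

open Set
open scoped ContDiff

section Leibniz

variable {g : ℝ → ℝ}

theorem hasDerivAt_iteratedDeriv (hg : ContDiff ℝ ∞ g) (k : ℕ) (x : ℝ) :
    HasDerivAt (iteratedDeriv k g) (iteratedDeriv (k + 1) g x) x := by
  rw [iteratedDeriv_succ]
  exact ((hg.differentiable_iteratedDeriv k (mod_cast ENat.natCast_lt_top k)) x).hasDerivAt

theorem iteratedDeriv_id_mul (hg : ContDiff ℝ ∞ g) (k : ℕ) :
    iteratedDeriv k (fun x => x * g x) =
      fun x => x * iteratedDeriv k g x + k * iteratedDeriv (k - 1) g x := by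
  induction k with
  | zero => simp
  | succ k ih =>
    funext x
    rw [iteratedDeriv_succ, ih]
    refine (((hasDerivAt_id x).mul (hasDerivAt_iteratedDeriv hg k x)).add
      ((hasDerivAt_iteratedDeriv hg (k - 1) x).const_mul (k : ℝ))).deriv.trans ?_
    rcases k with _ | k
    · simp; ring
    · simp only [id, Nat.add_sub_cancel, Nat.cast_add, Nat.cast_one]
      ring

theorem iteratedDeriv_sq_sub_one_mul (hg : ContDiff ℝ ∞ g) (k : ℕ) :
    iteratedDeriv k (fun x => (x ^ 2 - 1) * g x) =
      fun x => (x ^ 2 - 1) * iteratedDeriv k g x + 2 * k * x * iteratedDeriv (k - 1) g x +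
        k * (k - 1) * iteratedDeriv (k - 2) g x := by
  induction k with
  | zero => simp
  | succ k ih =>
    funext x
    rw [iteratedDeriv_succ, ih]
    have hq : HasDerivAt (fun y : ℝ => y ^ 2 - 1) (2 * x) x := by
      simpa using (hasDerivAt_pow 2 x).sub_const 1
    refine (((hq.mul (hasDerivAt_iteratedDeriv hg k x)).add
      (((hasDerivAt_id x).const_mul (2 * k : ℝ)).mul (hasDerivAt_iteratedDeriv hg (k - 1) x))).add
      ((hasDerivAt_iteratedDeriv hg (k - 2) x).const_mul ((k : ℝ) * (k - 1)))).deriv.trans ?_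
    rcases k with _ | _ | k
    · simp; ring
    · simp; ring
    · simp only [id, Nat.cast_add, Nat.cast_one,
        show k + 2 - 2 = k by omega, show k + 2 - 1 = k + 1 by omega,
        show k + 1 + 2 - 2 = k + 1 by omega, show k + 1 + 2 - 1 = k + 2 by omega]
      ring

end Leibniz

section Rodrigues

def rodriguesPow (L : ℕ) (x : ℝ) : ℝ := (x ^ 2 - 1) ^ L

variable (L n : ℕ) (x : ℝ)

theorem contDiff_rodriguesPow : ContDiff ℝ ∞ (rodriguesPow L) := by
  unfold rodriguesPow; fun_prop

theorem rodriguesPow_succ : rodriguesPow (L + 1) = fun x => (x ^ 2 - 1) * rodriguesPow L x := by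
  funext x; simp only [rodriguesPow, pow_succ]; ring

theorem deriv_rodriguesPow_succ :
    deriv (rodriguesPow (L + 1)) = fun x => 2 * (L + 1) * (x * rodriguesPow L x) := by
  funext x
  have hq : HasDerivAt (fun y : ℝ => y ^ 2 - 1) (2 * x) x := by
    simpa using (hasDerivAt_pow 2 x).sub_const 1
  unfold rodriguesPow
  rw [(hq.fun_pow (L + 1)).deriv, Nat.add_sub_cancel]
  push_cast
  ring

theorem sq_sub_one_mul_deriv_rodriguesPow :
    (x ^ 2 - 1) * deriv (rodriguesPow L) x = 2 * L * (x * rodriguesPow L x) := by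
  rcases L with _ | L
  · simp [show rodriguesPow 0 = fun _ => 1 from funext fun _ => pow_zero _]
  · rw [deriv_rodriguesPow_succ, rodriguesPow_succ]
    push_cast
    ring

theorem iteratedDeriv_rodriguesPow_ode :
    (x ^ 2 - 1) * iteratedDeriv (n + 2) (rodriguesPow L) x +
        2 * (n + 1) * x * iteratedDeriv (n + 1) (rodriguesPow L) x +
        (n + 1) * n * iteratedDeriv n (rodriguesPow L) x =
      2 * L * (x * iteratedDeriv (n + 1) (rodriguesPow L) x +
        (n + 1) * iteratedDeriv n (rodriguesPow L) x) := by
  have hw := contDiff_rodriguesPow L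
  have h := congrFun (congrArg (iteratedDeriv (n + 1))
    (funext (sq_sub_one_mul_deriv_rodriguesPow L))) x
  rw [iteratedDeriv_sq_sub_one_mul (contDiff_infty_iff_deriv.mp hw).2 (n + 1),
    iteratedDeriv_const_mul_field, iteratedDeriv_id_mul hw] at h
  simp only [← iteratedDeriv_succ', Nat.add_sub_cancel, Nat.cast_add, Nat.cast_one] at h
  have hn : (n : ℝ) * iteratedDeriv (n + 1 - 2 + 1) (rodriguesPow L) x =
      n * iteratedDeriv n (rodriguesPow L) x := by
    rcases n with _ | n <;> simp
  linear_combination h - (n + 1) * hn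

theorem iteratedDeriv_rodriguesPow_succ_add_two :
    iteratedDeriv (n + 2) (rodriguesPow (L + 1)) x =
      2 * (L + 1) * (x * iteratedDeriv (n + 1) (rodriguesPow L) x +
        (n + 1) * iteratedDeriv n (rodriguesPow L) x) := by
  rw [iteratedDeriv_succ', deriv_rodriguesPow_succ, iteratedDeriv_const_mul_field,
    iteratedDeriv_id_mul (contDiff_rodriguesPow L)]
  simp only [Nat.add_sub_cancel, Nat.cast_add, Nat.cast_one]

theorem iteratedDeriv_rodriguesPow_succ_add_one :
    (2 * L - n + 1) * iteratedDeriv (n + 1) (rodriguesPow (L + 1)) x =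
      2 * (L + 1) * ((n + 1) * x * iteratedDeriv n (rodriguesPow L) x +
        (x ^ 2 - 1) * iteratedDeriv (n + 1) (rodriguesPow L) x) := by
  have hw := contDiff_rodriguesPow L
  -- Expand `(rodriguesPow (L + 1))⁽ⁿ⁺¹⁾` in two ways; the unknown `(rodriguesPow L)⁽ⁿ⁻¹⁾` cancels.
  have h₁ := congrFun (iteratedDeriv_sq_sub_one_mul hw (n + 1)) x
  rw [← rodriguesPow_succ, show n + 1 - 2 = n - 1 by omega] at h₁
  have h₂ : iteratedDeriv (n + 1) (rodriguesPow (L + 1)) x =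
      2 * (L + 1) * (x * iteratedDeriv n (rodriguesPow L) x +
        n * iteratedDeriv (n - 1) (rodriguesPow L) x) := by
    rw [iteratedDeriv_succ', deriv_rodriguesPow_succ, iteratedDeriv_const_mul_field,
      iteratedDeriv_id_mul hw]
  simp only [Nat.add_sub_cancel, Nat.cast_add, Nat.cast_one] at h₁
  linear_combination 2 * (L + 1) * h₁ - (n + 1) * h₂

end Rodrigues

theorem hasDerivAt_one_sub_sq_rpow (p : ℝ) {x : ℝ} (hx : 0 < 1 - x ^ 2) :
    HasDerivAt (fun y : ℝ => (1 - y ^ 2) ^ p) (-(2 * p * x) * (1 - x ^ 2) ^ (p - 1)) x := by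
  have hq : HasDerivAt (fun y : ℝ => 1 - y ^ 2) (-(2 * x)) x := by
    simpa using (hasDerivAt_pow 2 x).const_sub 1
  convert hq.rpow_const (p := p) (Or.inl hx.ne') using 1
  ring

noncomputable def sheppardTorokCore (L n : ℕ) (m x : ℝ) : ℝ :=
  (1 - x ^ 2) * iteratedDeriv (n + 1) (rodriguesPow L) x -
    m * (1 + x) * iteratedDeriv n (rodriguesPow L) x

theorem hasDerivAt_sheppardTorokCore (L n : ℕ) (m x : ℝ) :
    HasDerivAt (sheppardTorokCore L n m)
      ((1 - x ^ 2) * iteratedDeriv (n + 2) (rodriguesPow L) x -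
        (2 * x + m * (1 + x)) * iteratedDeriv (n + 1) (rodriguesPow L) x -
        m * iteratedDeriv n (rodriguesPow L) x) x := by
  have hw := contDiff_rodriguesPow L
  have hq : HasDerivAt (fun y : ℝ => 1 - y ^ 2) (-(2 * x)) x := by
    simpa using (hasDerivAt_pow 2 x).const_sub 1
  have hlin : HasDerivAt (fun y : ℝ => m * (1 + y)) m x := by
    simpa using ((hasDerivAt_id x).const_add 1).const_mul m
  refine ((hq.fun_mul (hasDerivAt_iteratedDeriv hw (n + 1) x)).fun_sub
    (hlin.fun_mul (hasDerivAt_iteratedDeriv hw n x))).congr_deriv ?_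
  ring

theorem sheppardTorokCore_raising (L n : ℕ) (m x : ℝ) (hn : (n : ℝ) = L + m) :
    (1 - x ^ 2) * deriv (sheppardTorokCore L n m) x - (m - 1) * x * sheppardTorokCore L n m x =
      (L + 1) * (x - m / (L + 1) ^ 2) * sheppardTorokCore L n m x -
        L * (L + 1 - m) / (2 * (L + 1) ^ 2) * sheppardTorokCore (L + 1) (n + 1) m x := by
  have hode := iteratedDeriv_rodriguesPow_ode L n x
  have hsucc₂ := iteratedDeriv_rodriguesPow_succ_add_two L n x
  have hsucc₁ := iteratedDeriv_rodriguesPow_succ_add_one L n x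
  rw [hn] at hode hsucc₂ hsucc₁
  rw [(hasDerivAt_sheppardTorokCore L n m x).deriv]
  simp only [sheppardTorokCore]
  field_simp
  linear_combination (2 * (L + 1) ^ 2 * (x ^ 2 - 1)) * hode +
    (L * (L + 1 - m) * (1 - x ^ 2)) * hsucc₂ - (L * m * (1 + x)) * hsucc₁

section SheppardTorok

variable {l m : ℤ} {x : ℝ}

noncomputable def flmCoeff (l m : ℤ) : ℝ :=
  clm l m * ((-1) ^ m / (2 ^ l * l.toNat.factorial)) / √(l * (l + 1))

theorem Ulm_eq_rodriguesPow (hm : |m| ≤ l) :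
    Ulm l m = fun x => clm l m * ((-1) ^ m / (2 ^ l * l.toNat.factorial)) *
      ((1 - x ^ 2) ^ ((m : ℝ) / 2) * iteratedDeriv (l + m).toNat (rodriguesPow l.toNat) x) := by
  have hw : (fun y : ℝ => (y ^ 2 - 1) ^ l) = rodriguesPow l.toNat := by
    lift l to ℕ using (abs_nonneg m).trans hm
    funext y
    simp [rodriguesPow]
  funext x
  rw [Ulm, if_pos hm, Plm, hw]
  ring

theorem Flm_eq_sheppardTorokCore (hm : |m| ≤ l) (hx : x ∈ Ioo (-1) 1) :
    Flm l m x = flmCoeff l m *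
      ((1 - x ^ 2) ^ (((m : ℝ) - 1) / 2) * sheppardTorokCore l.toNat (l + m).toNat m x) := by
  have hx2 : 0 < 1 - x ^ 2 := by nlinarith [hx.1, hx.2]
  have hU := ((hasDerivAt_one_sub_sq_rpow ((m : ℝ) / 2) hx2).fun_mul
    (hasDerivAt_iteratedDeriv (contDiff_rodriguesPow l.toNat) (l + m).toNat x)).const_mul
    (clm l m * ((-1) ^ m / (2 ^ l * l.toNat.factorial)))
  rw [← Ulm_eq_rodriguesPow hm] at hU
  have hhalf : (1 - x ^ 2) ^ ((m : ℝ) / 2) =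
      (1 - x ^ 2) ^ (((m : ℝ) - 1) / 2) * √(1 - x ^ 2) := by
    rw [Real.sqrt_eq_rpow, ← Real.rpow_add hx2]; ring_nf
  have hhalf' : (1 - x ^ 2) ^ ((m : ℝ) / 2 - 1) =
      (1 - x ^ 2) ^ (((m : ℝ) - 1) / 2) / √(1 - x ^ 2) := by
    rw [Real.sqrt_eq_rpow, ← Real.rpow_sub hx2]; ring_nf
  have hs : 0 < √(1 - x ^ 2) := Real.sqrt_pos.mpr hx2
  have hss : 1 - x ^ 2 = √(1 - x ^ 2) ^ 2 := (Real.sq_sqrt hx2.le).symm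
  rw [Flm, hU.deriv, Ulm_eq_rodriguesPow hm, flmCoeff, sheppardTorokCore]
  simp only [hhalf, hhalf']
  set s := √(1 - x ^ 2)
  rw [hss]
  field_simp
  ring

theorem one_sub_sq_mul_deriv_Flm_s7 (hm : |m| ≤ l) (hx : x ∈ Ioo (-1) 1) :
    (1 - x ^ 2) * deriv (Flm l m) x = flmCoeff l m * ((1 - x ^ 2) ^ (((m : ℝ) - 1) / 2) *
      ((1 - x ^ 2) * deriv (sheppardTorokCore l.toNat (l + m).toNat m) x -
        (m - 1) * x * sheppardTorokCore l.toNat (l + m).toNat m x)) := by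
  have hx2 : 0 < 1 - x ^ 2 := by nlinarith [hx.1, hx.2]
  have hF : Flm l m =ᶠ[nhds x] fun y => flmCoeff l m *
      ((1 - y ^ 2) ^ (((m : ℝ) - 1) / 2) * sheppardTorokCore l.toNat (l + m).toNat m y) := by
    filter_upwards [isOpen_Ioo.mem_nhds hx] with y hy using Flm_eq_sheppardTorokCore hm hy
  have hcore := hasDerivAt_sheppardTorokCore l.toNat (l + m).toNat m x
  rw [hF.deriv_eq, (((hasDerivAt_one_sub_sq_rpow _ hx2).fun_mul hcore).const_mul _).deriv,
    hcore.deriv, Real.rpow_sub_one hx2.ne']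
  field_simp
  ring

theorem factorial_toNat_add_one {k : ℤ} (hk : 0 ≤ k) :
    ((k + 1).toNat.factorial : ℝ) = (k + 1) * k.toNat.factorial := by
  lift k to ℕ using hk
  simp [Nat.factorial_succ]

theorem clm_succ_sq (hm : |m| ≤ l) :
    clm (l + 1) m ^ 2 = (2 * l + 3) * (l + 1 - m) / ((2 * l + 1) * (l + 1 + m)) * clm l m ^ 2 := by
  obtain ⟨hm₁, hm₂⟩ := abs_le.mp hm
  have hl : (0 : ℝ) ≤ l := by exact_mod_cast (abs_nonneg m).trans hm
  have hlm : (0 : ℝ) ≤ l - m := by exact_mod_cast (by omega : (0 : ℤ) ≤ l - m)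
  have hlm' : (0 : ℝ) ≤ l + m := by exact_mod_cast (by omega : (0 : ℤ) ≤ l + m)
  have : (l : ℝ) + 1 + m ≠ 0 := by linarith
  unfold clm
  rw [Real.sq_sqrt (by push_cast; positivity), Real.sq_sqrt (by positivity),
    show l + 1 - m = (l - m) + 1 by ring, show l + 1 + m = (l + m) + 1 by ring,
    factorial_toNat_add_one (by omega), factorial_toNat_add_one (by omega)]
  push_cast
  field_simp
  ring

theorem zetalm_sq (hl : 1 ≤ l) (hm : |m| ≤ l) :
    zetalm l m ^ 2 =
      (l + 1) * (l - 1) * (l + m) * (l - m) / ((2 * l + 1) * (2 * l - 1)) / l ^ 2 := by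
  obtain ⟨hm₁, hm₂⟩ := abs_le.mp hm
  have hl' : (1 : ℝ) ≤ l := by exact_mod_cast hl
  have hlm : (0 : ℝ) ≤ l - m := by exact_mod_cast (by omega : (0 : ℤ) ≤ l - m)
  have hlm' : (0 : ℝ) ≤ l + m := by exact_mod_cast (by omega : (0 : ℤ) ≤ l + m)
  have hl1 : (0 : ℝ) ≤ l - 1 := by linarith
  have hl2 : (0 : ℝ) < 2 * l - 1 := by linarith
  rw [zetalm, mul_pow, Real.sq_sqrt (by positivity)]
  ring

theorem zetalm_succ_mul_clm_succ (hl : 1 ≤ l) (hm : |m| ≤ l) :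
    (2 * l + 1) * zetalm (l + 1) m * clm (l + 1) m / √((l + 1) * (l + 1 + 1)) =
      l * (l + 1 - m) / (l + 1) * (clm l m / √(l * (l + 1))) := by
  obtain ⟨hm₁, hm₂⟩ := abs_le.mp hm
  have hl' : (1 : ℝ) ≤ l := by exact_mod_cast hl
  have hlm : (0 : ℝ) ≤ l + 1 - m := by exact_mod_cast (by omega : (0 : ℤ) ≤ l + 1 - m)
  have hlm' : (0 : ℝ) < l + 1 + m := by exact_mod_cast (by omega : (0 : ℤ) < l + 1 + m)
  have hζ : 0 ≤ zetalm (l + 1) m := by unfold zetalm; push_cast; positivity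
  have hc : 0 ≤ clm l m := Real.sqrt_nonneg _
  have hc' : 0 ≤ clm (l + 1) m := Real.sqrt_nonneg _
  rw [← sq_eq_sq₀ (by positivity)
    (mul_nonneg (div_nonneg (mul_nonneg (by positivity) hlm) (by positivity)) (by positivity))]
  simp only [div_pow, mul_pow]
  rw [clm_succ_sq hm, zetalm_sq (by omega) (abs_le.mpr ⟨by omega, by omega⟩),
    Real.sq_sqrt (by positivity), Real.sq_sqrt (by positivity)]
  push_cast
  have : 2 * (l : ℝ) + 1 ≠ 0 := by positivity
  have : 2 * ((l : ℝ) + 1) - 1 ≠ 0 := by linarith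
  field_simp
  ring

theorem flmCoeff_succ (hl : 1 ≤ l) (hm : |m| ≤ l) :
    (2 * l + 1) * zetalm (l + 1) m * flmCoeff (l + 1) m =
      l * (l + 1 - m) / (2 * (l + 1) ^ 2) * flmCoeff l m := by
  have hl' : (0 : ℝ) < l + 1 := by exact_mod_cast (by omega : (0 : ℤ) < l + 1)
  have hK : (-1 : ℝ) ^ m / (2 ^ (l + 1) * ((l + 1).toNat.factorial : ℝ)) =
      (-1) ^ m / (2 ^ l * l.toNat.factorial) / (2 * (l + 1)) := by
    rw [zpow_add_one₀ two_ne_zero, factorial_toNat_add_one (by omega)]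
    field_simp
  unfold flmCoeff
  rw [hK]
  push_cast
  linear_combination (norm := skip) ((-1) ^ m / (2 ^ l * l.toNat.factorial) / (2 * (l + 1)) : ℝ) *
    zetalm_succ_mul_clm_succ hl hm
  field_simp
  ring

end SheppardTorok

/-- Derivative recurrence (raising form) for `F_{lm}`. -/
theorem Flm_deriv_recurrence_upper (l m : ℤ) (hl : 1 ≤ l) (hm₁ : -l ≤ m) (hm₂ : m ≤ l)
    (x : ℝ) (hx : x ∈ Set.Ioo (-1 : ℝ) 1) :
    (1 - x ^ 2) * deriv (Flm l m) x =
      ((l : ℝ) + 1) * (x - (m : ℝ) / ((l : ℝ) + 1) ^ 2) * Flm l m x -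
        (2 * (l : ℝ) + 1) * zetalm (l + 1) m * Flm (l + 1) m x := by
  have hm : |m| ≤ l := abs_le.mpr ⟨hm₁, hm₂⟩
  have hL : (l.toNat : ℝ) = l := by exact_mod_cast Int.toNat_of_nonneg (by omega)
  have hn : ((l + m).toNat : ℝ) = l.toNat + m := by
    rw [hL]; exact_mod_cast Int.toNat_of_nonneg (by omega)
  have hraise := sheppardTorokCore_raising l.toNat (l + m).toNat m x hn
  rw [hL] at hraise
  rw [one_sub_sq_mul_deriv_Flm_s7 hm hx, Flm_eq_sheppardTorokCore hm hx,
    Flm_eq_sheppardTorokCore (abs_le.mpr ⟨by omega, by omega⟩) hx,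
    show (l + 1).toNat = l.toNat + 1 by omega, show (l + 1 + m).toNat = (l + m).toNat + 1 by omega]
  linear_combination (flmCoeff l m * (1 - x ^ 2) ^ (((m : ℝ) - 1) / 2)) * hraise +
    ((1 - x ^ 2) ^ (((m : ℝ) - 1) / 2) * sheppardTorokCore (l.toNat + 1) ((l + m).toNat + 1) m x) *
      flmCoeff_succ hl hm
end

section
/- Addition theorem for F_{lm}: for every integer l ≥ 1 and all x ∈ (−1, 1), ∑_{m=−l}^{l} [F_{lm}(x)]^2 = (2l + 1)/2. -/
/-!
Write `U_m = U_{lm}`, `Q_k = (d/dx)^k (x² - 1)^l` and `b_m = √((l + m)(l - m + 1))`. Rodrigues'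
formula `U_m ∝ (1 - x²)^{m/2} Q_{l+m}` together with the recurrence
`(x² - 1) Q_{k+1} = 2(l - k) x Q_k + k(2l + 1 - k) Q_{k-1}` gives the ladder relations
`b_{m+1} U_{m+1} = -(√(1-x²) U_m' + m x U_m / √(1-x²))` and
`b_m U_{m-1} = √(1-x²) U_m' - m x U_m / √(1-x²)`.
Now `l(l+1) F_m² = (1 - x²) U_m'² + m² U_m² / (1 - x²) - 2 m U_m U_m'`. Summed over `m`, the ladder
relations and an index shift turn the first two terms into `l(l+1) ∑ U_m²`; the last sum vanishes
because `U_{-m} = (-1)^m U_m`; and `∑ U_m² = (2l+1)/2` (Unsöld), because its derivative telescopes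
to `0` and at `x = 1` only `U_0(1)² = c_{l0}²` survives.
-/

open MeasureTheory

open Polynomial Nat

section Rodrigues

variable {R : Type*} [CommRing R]

noncomputable def rodrigues (l k : ℕ) : R[X] := derivative^[k] ((X ^ 2 - 1) ^ l)

lemma rodrigues_succ (l k : ℕ) : rodrigues l (k + 1) = derivative (rodrigues (R := R) l k) :=
  Function.iterate_succ_apply' _ _ _

lemma derivative_sq_sub_one : derivative (X ^ 2 - 1 : R[X]) = 2 * X := by
  simp; ring

-- The `k`-th derivative of `(X² - 1) W' = 2 l X W` for `W = (X² - 1)^l`.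
lemma rodrigues_recurrence (l k : ℕ) :
    (X ^ 2 - 1) * rodrigues l (k + 1) = 2 * ((l : R[X]) - (k : R[X])) * X * rodrigues l k +
      (k : R[X]) * (2 * (l : R[X]) + 1 - (k : R[X])) * rodrigues l (k - 1) := by
  induction k with
  | zero =>
    rw [zero_add, rodrigues_succ]
    simp only [rodrigues, Function.iterate_zero_apply, derivative_pow, derivative_sq_sub_one,
      C_eq_natCast]
    cases l with
    | zero => simp
    | succ n => push_cast; ring
  | succ k ih =>
    have h := congrArg derivative ih
    simp only [derivative_mul, derivative_sub, derivative_add, derivative_X_pow, derivative_X,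
      derivative_natCast, derivative_ofNat, derivative_one, Nat.cast_ofNat, C_ofNat,
      ← rodrigues_succ] at h
    have hk : (k : R[X]) * rodrigues l (k - 1 + 1) = (k : R[X]) * rodrigues l k := by
      cases k with
      | zero => simp
      | succ j => rfl
    simp only [add_tsub_cancel_right]
    push_cast at h ⊢
    linear_combination h + (2 * l + 1 - k : R[X]) * hk

lemma rodrigues_two_mul [Nontrivial R] (l : ℕ) : rodrigues l (2 * l) = C ((2 * l)! : R) := by
  have hmonic : ((X ^ 2 - 1 : R[X]) ^ l).Monic := by
    simpa using (monic_X_pow_sub_C (1 : R) two_ne_zero).pow l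
  have hdeg : ((X ^ 2 - 1 : R[X]) ^ l).natDegree = 2 * l := by
    rw [show (X ^ 2 - 1 : R[X]) = X ^ 2 - C 1 by simp,
      (monic_X_pow_sub_C (1 : R) two_ne_zero).natDegree_pow, natDegree_X_pow_sub_C, mul_comm]
  unfold rodrigues
  rw [eq_C_of_natDegree_le_zero ((natDegree_iterate_derivative _ _).trans (by omega)),
    coeff_iterate_derivative, zero_add, Nat.descFactorial_self, ← hdeg,
    hmonic.coeff_natDegree, nsmul_one]

lemma rodrigues_two_mul_add_one [Nontrivial R] (l : ℕ) :
    rodrigues (R := R) l (2 * l + 1) = 0 := by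
  rw [rodrigues_succ, rodrigues_two_mul, derivative_C]

lemma eval_one_rodrigues_self (l : ℕ) : (rodrigues l l).eval (1 : R) = 2 ^ l * l ! := by
  have h := aeval_iterate_derivative_self ((X ^ 2 - 1 : R[X]) ^ l) l (1 : R) (p' := (X + 1) ^ l)
    (by rw [Algebra.algebraMap_self, Polynomial.map_id, map_one, ← mul_pow]; ring)
  rw [coe_aeval_eq_eval] at h
  rw [rodrigues, h]
  simp; ring

lemma factorial_mul_rodrigues_sub [IsDomain R] [CharZero R] (l m : ℕ) (hm : m ≤ l) :
    ((l + m)! : R[X]) * rodrigues l (l - m) =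
      ((l - m)! : R[X]) * (X ^ 2 - 1) ^ m * rodrigues l (l + m) := by
  induction hm using Nat.decreasingInduction with
  | self =>
    rw [Nat.sub_self, ← two_mul, rodrigues_two_mul]
    simp [rodrigues]; ring
  | of_succ m hm ih =>
    obtain ⟨i, rfl⟩ : ∃ i, l = i + m + 1 := ⟨l - m - 1, by omega⟩
    have h := congrArg derivative ih
    rw [show i + m + 1 - (m + 1) = i by omega,
      show i + m + 1 + (m + 1) = i + m + 1 + m + 1 by omega] at h
    simp only [derivative_mul, derivative_natCast, derivative_pow, derivative_sq_sub_one,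
      C_eq_natCast, ← rodrigues_succ, zero_mul, zero_add] at h
    have hrec := rodrigues_recurrence (R := R) (i + m + 1) (i + m + 1 + m + 1)
    rw [Nat.add_sub_cancel] at hrec
    rw [show i + m + 1 - m = i + 1 by omega, Nat.factorial_succ i]
    rw [Nat.factorial_succ (i + m + 1 + m)] at h
    have hne : ((i + m + 1 + m + 1 : ℕ) : R[X]) ≠ 0 := Nat.cast_ne_zero.mpr (by omega)
    apply mul_left_cancel₀ hne
    push_cast at h hrec ⊢
    linear_combination h + (i ! : R[X]) * (X ^ 2 - 1) ^ m * hrec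

end Rodrigues

lemma iteratedDeriv_sq_sub_one_pow (l k : ℕ) :
    iteratedDeriv k (fun y : ℝ => (y ^ 2 - 1) ^ l) = fun y => (rodrigues l k).eval y := by
  induction k with
  | zero => simp [rodrigues]
  | succ k ih =>
    rw [iteratedDeriv_succ, ih, rodrigues_succ]
    exact funext fun y => Polynomial.deriv _

open Real Finset

noncomputable def rodriguesCoeff (l : ℕ) (m : ℤ) : ℝ := clm l m * (-1) ^ m / (2 ^ l * l !)

noncomputable def ladderCoeff (l : ℕ) (m : ℤ) : ℝ := √(((l : ℝ) + m) * ((l : ℝ) - m + 1))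

lemma one_sub_sq_pos {y : ℝ} (hy : y ∈ Set.Ioo (-1 : ℝ) 1) : 0 < 1 - y ^ 2 := by
  nlinarith [hy.1, hy.2]

lemma neg_one_zpow_mul_self {α : Type*} [Field α] (m : ℤ) : (-1 : α) ^ m * (-1) ^ m = 1 := by
  rw [← mul_zpow]; norm_num

lemma clm_eq_sqrt_s13 (l : ℕ) {m : ℤ} {i j : ℕ} (hi : (i : ℤ) = l - m) (hj : (j : ℤ) = l + m) :
    clm l m = √((2 * l + 1) / 2 * i ! / j !) := by
  rw [clm, show ((l : ℤ) - m).toNat = i by omega, show ((l : ℤ) + m).toNat = j by omega]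
  push_cast; rfl

lemma clm_zero_sq (l : ℕ) : clm l 0 ^ 2 = (2 * l + 1) / 2 := by
  rw [clm_eq_sqrt_s13 l (i := l) (j := l) (by simp) (by simp), sq_sqrt (by positivity)]
  field_simp

lemma ladderCoeff_sq (l : ℕ) {m : ℤ} (h₁ : -(l : ℤ) ≤ m) (h₂ : m ≤ l + 1) :
    ladderCoeff l m ^ 2 = (l + m) * (l - m + 1) := by
  have h₁' : -(l : ℝ) ≤ m := by exact_mod_cast h₁
  have h₂' : (m : ℝ) ≤ l + 1 := by exact_mod_cast h₂
  exact sq_sqrt (by nlinarith)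

lemma ladderCoeff_mul_clm_succ (l : ℕ) {m : ℤ} (h₁ : -(l : ℤ) ≤ m) (h₂ : m < l) :
    ladderCoeff l (m + 1) * clm l (m + 1) = clm l m := by
  obtain ⟨i, hi⟩ : ∃ i : ℕ, (i : ℤ) = l - m - 1 := ⟨(l - m - 1).toNat, by omega⟩
  obtain ⟨j, hj⟩ : ∃ j : ℕ, (j : ℤ) = l + m := ⟨(l + m).toNat, by omega⟩
  have hi' : (l : ℝ) - m = i + 1 := by
    have := congrArg (fun z : ℤ => (z : ℝ)) hi; push_cast at this; linarith
  have hj' : (l : ℝ) + m = j := by exact_mod_cast hj.symm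
  rw [clm_eq_sqrt_s13 l (i := i) (j := j + 1) (by omega) (by push_cast; omega),
    clm_eq_sqrt_s13 l (i := i + 1) (j := j) (by push_cast; omega) hj, ladderCoeff,
    show ((l : ℝ) + ((m + 1 : ℤ) : ℝ)) * ((l : ℝ) - ((m + 1 : ℤ) : ℝ) + 1) = (j + 1) * (i + 1) by
      push_cast; linear_combination ((l : ℝ) + m + 1) * hi' + (i + 1 : ℝ) * hj',
    ← sqrt_mul (by positivity)]
  congr 1
  push_cast [Nat.factorial_succ]
  field_simp

lemma clm_neg (l m : ℕ) (hm : m ≤ l) : clm l (-m) = (l + m)! / (l - m)! * clm l m := by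
  rw [clm_eq_sqrt_s13 l (i := l + m) (j := l - m) (by push_cast; ring) (by push_cast [hm]; ring),
    clm_eq_sqrt_s13 l (i := l - m) (j := l + m) (by push_cast [hm]; ring) (by push_cast; ring),
    ← sqrt_sq (by positivity : (0 : ℝ) ≤ (l + m)! / (l - m)!), ← sqrt_mul (by positivity)]
  congr 1
  field_simp

lemma Ulm_eq_rodrigues (l : ℕ) {m : ℤ} {k : ℕ} (hm : |m| ≤ l) (hk : (k : ℤ) = l + m) (y : ℝ) :
    Ulm l m y = rodriguesCoeff l m * (1 - y ^ 2) ^ ((m : ℝ) / 2) * (rodrigues l k).eval y := by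
  rw [Ulm, if_pos hm, Plm, show ((l : ℤ) + m).toNat = k by omega, Int.toNat_natCast]
  simp only [zpow_natCast, iteratedDeriv_sq_sub_one_pow, rodriguesCoeff]
  ring

lemma Ulm_neg_natCast (l m : ℕ) {y : ℝ} (hy : y ∈ Set.Ioo (-1 : ℝ) 1) :
    Ulm l (-m) y = (-1) ^ m * Ulm l m y := by
  by_cases hm : m ≤ l
  · have hs := one_sub_sq_pos hy
    have hpoly := congrArg (eval y) (factorial_mul_rodrigues_sub l m hm)
    simp only [eval_mul, eval_natCast, eval_pow, eval_sub, eval_X, eval_one] at hpoly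
    have hpow : (1 - y ^ 2) ^ m = ((1 - y ^ 2) ^ ((m : ℝ) / 2)) ^ 2 := by
      rw [← rpow_mul_natCast hs.le, ← rpow_natCast]; ring_nf
    rw [Ulm_eq_rodrigues l (k := l - m) (by simp; omega) (by push_cast [hm]; ring),
      Ulm_eq_rodrigues l (k := l + m) (by simp; omega) (by push_cast; ring), rodriguesCoeff,
      rodriguesCoeff, clm_neg l m hm, Int.cast_neg, Int.cast_natCast, neg_div, rpow_neg hs.le]
    field_simp
    rw [show (y ^ 2 - 1) ^ m = (-1) ^ m * (1 - y ^ 2) ^ m by rw [← mul_pow]; ring, hpow] at hpoly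
    rw [zpow_neg, zpow_natCast, ← inv_pow, inv_neg_one]
    linear_combination (clm l m * (-1) ^ m) * hpoly
  · simp [Ulm, hm]

lemma Ulm_neg (l : ℕ) (m : ℤ) {y : ℝ} (hy : y ∈ Set.Ioo (-1 : ℝ) 1) :
    Ulm l (-m) y = (-1) ^ m * Ulm l m y := by
  obtain ⟨n, rfl | rfl⟩ := Int.eq_nat_or_neg m
  · rw [Ulm_neg_natCast l n hy, zpow_natCast]
  · rw [neg_neg, Ulm_neg_natCast l n hy, ← mul_assoc, ← zpow_natCast, ← zpow_add₀ (by norm_num),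
      neg_add_cancel, zpow_zero, one_mul]

lemma continuous_Ulm (l : ℕ) {m : ℤ} (hm : 0 ≤ m) : Continuous (Ulm l m) := by
  by_cases h : |m| ≤ l
  · obtain ⟨k, hk⟩ : ∃ k : ℕ, (k : ℤ) = l + m := ⟨(l + m).toNat, by omega⟩
    rw [funext (Ulm_eq_rodrigues l h hk)]
    have hexp : 0 ≤ (m : ℝ) / 2 := by positivity
    exact (continuous_const.mul ((continuous_rpow_const hexp).comp (by fun_prop))).mul
      (rodrigues l k).continuous
  · rw [show Ulm l m = fun _ => 0 from funext fun _ => if_neg h]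
    exact continuous_const

lemma Ulm_one_of_pos (l : ℕ) {m : ℤ} (hm : 0 < m) : Ulm l m 1 = 0 := by
  by_cases h : |m| ≤ l
  · obtain ⟨k, hk⟩ : ∃ k : ℕ, (k : ℤ) = l + m := ⟨(l + m).toNat, by omega⟩
    rw [Ulm_eq_rodrigues l h hk, one_pow, sub_self, zero_rpow (by positivity), mul_zero, zero_mul]
  · exact if_neg h

lemma Ulm_zero_one (l : ℕ) : Ulm l 0 1 = clm l 0 := by
  rw [Ulm_eq_rodrigues l (k := l) (by simp) (by simp), eval_one_rodrigues_self, rodriguesCoeff]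
  field_simp
  simp

lemma hasDerivAt_Ulm (l : ℕ) {m : ℤ} {k : ℕ} (hm : |m| ≤ l) (hk : (k : ℤ) = l + m) {y : ℝ}
    (hy : y ∈ Set.Ioo (-1 : ℝ) 1) :
    HasDerivAt (Ulm l m) (rodriguesCoeff l m * (1 - y ^ 2) ^ ((m : ℝ) / 2 - 1) *
      ((1 - y ^ 2) * (rodrigues l (k + 1)).eval y - m * y * (rodrigues l k).eval y)) y := by
  have hs := one_sub_sq_pos hy
  have hsq : HasDerivAt (fun t : ℝ => 1 - t ^ 2) (-(2 * y)) y := by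
    simpa using (hasDerivAt_pow 2 y).const_sub 1
  have h := ((hsq.rpow_const (p := (m : ℝ) / 2) (Or.inl hs.ne')).mul
    ((rodrigues l k).hasDerivAt y)).const_mul (rodriguesCoeff l m)
  rw [show Ulm l m = fun t => rodriguesCoeff l m * ((1 - t ^ 2) ^ ((m : ℝ) / 2) *
    (rodrigues l k).eval t) from funext fun t => by rw [Ulm_eq_rodrigues l hm hk, mul_assoc]]
  refine h.congr_deriv ?_
  rw [rodrigues_succ, rpow_sub_one hs.ne']
  field_simp
  ring

lemma differentiableAt_Ulm (l : ℕ) {m : ℤ} (hm : |m| ≤ l) {y : ℝ}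
    (hy : y ∈ Set.Ioo (-1 : ℝ) 1) :
    DifferentiableAt ℝ (Ulm l m) y :=
  have := abs_le.mp hm
  (hasDerivAt_Ulm l hm (k := (l + m).toNat) (by omega) hy).differentiableAt

lemma rpow_int_add_one_div_two {s : ℝ} (hs : 0 < s) (m : ℤ) :
    s ^ (((m + 1 : ℤ) : ℝ) / 2) = s ^ ((m : ℝ) / 2) * √s := by
  rw [sqrt_eq_rpow, ← rpow_add hs]; push_cast; ring_nf

lemma rpow_int_sub_one_div_two {s : ℝ} (hs : 0 < s) (m : ℤ) :
    s ^ (((m - 1 : ℤ) : ℝ) / 2) = s ^ ((m : ℝ) / 2) / √s := by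
  rw [sqrt_eq_rpow, ← rpow_sub hs]; push_cast; ring_nf

lemma ladderCoeff_mul_Ulm_succ (l : ℕ) {m : ℤ} (hm : |m| ≤ l) {y : ℝ}
    (hy : y ∈ Set.Ioo (-1 : ℝ) 1) :
    ladderCoeff l (m + 1) * Ulm l (m + 1) y =
      -(√(1 - y ^ 2) * deriv (Ulm l m) y + m * y / √(1 - y ^ 2) * Ulm l m y) := by
  have hm' := abs_le.mp hm
  obtain ⟨k, hk⟩ : ∃ k : ℕ, (k : ℤ) = l + m := ⟨(l + m).toNat, by omega⟩
  have hs := one_sub_sq_pos hy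
  have hlhs : ladderCoeff l (m + 1) * Ulm l (m + 1) y = -(rodriguesCoeff l m *
      ((1 - y ^ 2) ^ ((m : ℝ) / 2) * √(1 - y ^ 2)) * (rodrigues l (k + 1)).eval y) := by
    rcases hm'.2.eq_or_lt with rfl | hlt
    · rw [show k + 1 = 2 * l + 1 by omega, rodrigues_two_mul_add_one,
        show ladderCoeff l (l + 1) = 0 by simp [ladderCoeff]]
      simp
    · rw [Ulm_eq_rodrigues l (k := k + 1) (abs_le.mpr ⟨by omega, by omega⟩) (by push_cast; omega),
        rpow_int_add_one_div_two hs]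
      simp only [rodriguesCoeff, zpow_add_one₀ (by norm_num : (-1 : ℝ) ≠ 0),
        ← ladderCoeff_mul_clm_succ l hm'.1 hlt]
      ring
  rw [hlhs, (hasDerivAt_Ulm l hm hk hy).deriv, Ulm_eq_rodrigues l hm hk, rpow_sub_one hs.ne']
  have hrr : √(1 - y ^ 2) ^ 2 = 1 - y ^ 2 := sq_sqrt hs.le
  field_simp
  linear_combination (-(rodriguesCoeff l m * y * m * (rodrigues l k).eval y)) * hrr

lemma ladderCoeff_mul_Ulm_pred (l : ℕ) {m : ℤ} (hm : |m| ≤ l) {y : ℝ}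
    (hy : y ∈ Set.Ioo (-1 : ℝ) 1) :
    ladderCoeff l m * Ulm l (m - 1) y =
      √(1 - y ^ 2) * deriv (Ulm l m) y - m * y / √(1 - y ^ 2) * Ulm l m y := by
  have hm' := abs_le.mp hm
  obtain ⟨k, hk⟩ : ∃ k : ℕ, (k : ℤ) = l + m := ⟨(l + m).toNat, by omega⟩
  have hs := one_sub_sq_pos hy
  have hlhs : ladderCoeff l m * Ulm l (m - 1) y = -(ladderCoeff l m ^ 2 * rodriguesCoeff l m *
      ((1 - y ^ 2) ^ ((m : ℝ) / 2) / √(1 - y ^ 2)) * (rodrigues l (k - 1)).eval y) := by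
    rcases hm'.1.eq_or_lt with rfl | hlt
    · rw [show ladderCoeff l (-l) = 0 by simp [ladderCoeff]]
      simp
    · rw [Ulm_eq_rodrigues l (k := k - 1) (abs_le.mpr ⟨by omega, by omega⟩) (by omega),
        rpow_int_sub_one_div_two hs]
      have hc := ladderCoeff_mul_clm_succ l (m := m - 1) (by omega) (by omega)
      rw [sub_add_cancel] at hc
      simp only [rodriguesCoeff, zpow_sub_one₀ (by norm_num : (-1 : ℝ) ≠ 0), ← hc]
      ring
  have hrec := congrArg (eval y) (rodrigues_recurrence l k)
  simp only [eval_mul, eval_add, eval_sub, eval_pow, eval_X, eval_one, eval_natCast,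
    eval_ofNat] at hrec
  rw [show (k : ℝ) = l + m by exact_mod_cast hk] at hrec
  rw [hlhs, (hasDerivAt_Ulm l hm hk hy).deriv, Ulm_eq_rodrigues l hm hk, rpow_sub_one hs.ne',
    ladderCoeff_sq l (by omega) (by omega)]
  have hrr : √(1 - y ^ 2) ^ 2 = 1 - y ^ 2 := sq_sqrt hs.le
  field_simp
  linear_combination rodriguesCoeff l m * (1 - y ^ 2) * hrec - rodriguesCoeff l m *
    ((1 - y ^ 2) * (rodrigues l (k + 1)).eval y - m * y * (rodrigues l k).eval y) * hrr

lemma sum_Icc_comp_add_one {M : Type*} [AddCommMonoid M] (f : ℤ → M) {a b : ℤ} (hab : a ≤ b + 1)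
    (ha : f a = 0) (hb : f (b + 1) = 0) : ∑ m ∈ Icc a b, f (m + 1) = ∑ m ∈ Icc a b, f m := by
  have hshift : ∑ m ∈ Icc a b, f (m + 1) = ∑ m ∈ Icc (a + 1) (b + 1), f m := by
    rw [← map_add_right_Icc, sum_map]; rfl
  rw [hshift, ← zero_add (∑ m ∈ Icc (a + 1) (b + 1), f m), ← ha, ← sum_insert (by simp),
    insert_Icc_add_one_left_eq_Icc hab, ← insert_Icc_right_eq_Icc_add_one hab,
    sum_insert (by simp), hb, zero_add]

lemma sum_Icc_comp_sub_one {M : Type*} [AddCommMonoid M] (f : ℤ → M) {a b : ℤ} (hab : a ≤ b + 1)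
    (ha : f (a - 1) = 0) (hb : f b = 0) : ∑ m ∈ Icc a b, f (m - 1) = ∑ m ∈ Icc a b, f m := by
  simpa using (sum_Icc_comp_add_one (fun m => f (m - 1)) hab ha (by simpa using hb)).symm

lemma sum_Icc_neg_eq_zero_of_odd {M : Type*} [AddCommGroup M] [IsAddTorsionFree M] (f : ℤ → M)
    (hf : ∀ m, f (-m) = -f m) (n : ℤ) : ∑ m ∈ Icc (-n) n, f m = 0 := by
  have h : ∑ m ∈ Icc (-n) n, f m = ∑ m ∈ Icc (-n) n, f (-m) :=
    sum_nbij' Neg.neg Neg.neg (by simp; omega) (by simp; omega) (by simp) (by simp) (by simp)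
  rwa [sum_congr rfl fun m _ => hf m, sum_neg_distrib, self_eq_neg] at h

lemma hasDerivAt_sum_Ulm_sq (l : ℕ) {y : ℝ} (hy : y ∈ Set.Ioo (-1 : ℝ) 1) :
    HasDerivAt (fun t => ∑ m ∈ Icc (-(l : ℤ)) l, Ulm l m t ^ 2) 0 y := by
  have hmem : ∀ m ∈ Icc (-(l : ℤ)) l, |m| ≤ l := fun m hm => abs_le.mpr (mem_Icc.mp hm)
  have hsum := HasDerivAt.fun_sum fun m hm =>
    ((differentiableAt_Ulm l (hmem m hm) hy).hasDerivAt).pow 2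
  refine hsum.congr_deriv ?_
  simp only [Nat.cast_ofNat, Nat.add_one_sub_one, pow_one]
  have hr : 0 < √(1 - y ^ 2) := sqrt_pos.mpr (one_sub_sq_pos hy)
  set B : ℤ → ℝ := fun m => ladderCoeff l m * Ulm l (m - 1) y * Ulm l m y
  -- `2 √(1-y²) U_m U_m'` is `B m - B (m + 1)` by the two ladder relations, so the sum telescopes.
  have htele : ∑ m ∈ Icc (-(l : ℤ)) l, (B m - B (m + 1)) = 0 := by
    rw [sum_sub_distrib, sum_Icc_comp_add_one B (by omega) (by simp [B, ladderCoeff])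
      (by simp [B, ladderCoeff]), sub_self]
  have key : √(1 - y ^ 2) * ∑ m ∈ Icc (-(l : ℤ)) l, 2 * Ulm l m y * deriv (Ulm l m) y =
      ∑ m ∈ Icc (-(l : ℤ)) l, (B m - B (m + 1)) := by
    rw [mul_sum]
    refine sum_congr rfl fun m hm => ?_
    have h₁ := ladderCoeff_mul_Ulm_succ l (hmem m hm) hy
    have h₂ := ladderCoeff_mul_Ulm_pred l (hmem m hm) hy
    simp only [B, add_sub_cancel_right]
    linear_combination (-Ulm l m y) * (h₂ - h₁)
  exact (mul_eq_zero.mp (key.trans htele)).resolve_left hr.ne'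

lemma sum_Ulm_sq (l : ℕ) {x : ℝ} (hx : x ∈ Set.Ioo (-1 : ℝ) 1) :
    ∑ m ∈ Icc (-(l : ℤ)) l, Ulm l m x ^ 2 = (2 * l + 1) / 2 := by
  -- `H` agrees with the sum on `(-1, 1)` and, unlike `U_m` for `m < 0`, is continuous at `1`.
  set H : ℝ → ℝ := fun t => ∑ m ∈ Icc (-(l : ℤ)) l, Ulm l |m| t ^ 2
  have hH : ∀ t ∈ Set.Ioo (-1 : ℝ) 1, H t = ∑ m ∈ Icc (-(l : ℤ)) l, Ulm l m t ^ 2 := by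
    refine fun t ht => sum_congr rfl fun m _ => ?_
    rcases abs_choice m with h | h
    · rw [h]
    · rw [h, Ulm_neg l m ht, mul_pow, sq ((-1 : ℝ) ^ m), neg_one_zpow_mul_self, one_mul]
  have hderiv : ∀ t ∈ Set.Ioo (-1 : ℝ) 1, HasDerivAt H 0 t := fun t ht =>
    (hasDerivAt_sum_Ulm_sq l ht).congr_of_eventuallyEq
      (Filter.eventually_of_mem (isOpen_Ioo.mem_nhds ht) hH)
  have hcont : Continuous H :=
    continuous_finsetSum _ fun m _ => (continuous_Ulm l (abs_nonneg m)).pow 2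
  have hH1 : ∑ m ∈ Icc (-(l : ℤ)) l, Ulm l |m| 1 ^ 2 = (2 * l + 1) / 2 := by
    rw [sum_eq_single_of_mem 0 (by simp), abs_zero, Ulm_zero_one, clm_zero_sq]
    intro m _ hm
    rw [Ulm_one_of_pos l (abs_pos.mpr hm), zero_pow two_ne_zero]
  have hconst := constant_of_has_deriv_right_zero hcont.continuousOn
    (fun t ht => (hderiv t ⟨hx.1.trans_le ht.1, ht.2⟩).hasDerivWithinAt) 1
    ⟨hx.2.le, le_rfl⟩
  rw [← hH x hx, ← hconst]
  exact hH1

lemma sum_mul_Ulm_mul_deriv_Ulm (l : ℕ) {y : ℝ} (hy : y ∈ Set.Ioo (-1 : ℝ) 1) :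
    ∑ m ∈ Icc (-(l : ℤ)) l, m * Ulm l m y * deriv (Ulm l m) y = 0 := by
  refine sum_Icc_neg_eq_zero_of_odd _ (fun m => ?_) _
  have hev : Ulm l (-m) =ᶠ[nhds y] fun t => (-1) ^ m * Ulm l m t :=
    Filter.eventually_of_mem (isOpen_Ioo.mem_nhds hy) fun t ht => Ulm_neg l m ht
  rw [hev.deriv_eq, deriv_const_mul_field', Ulm_neg l m hy]
  push_cast
  linear_combination (-(m * Ulm l m y * deriv (Ulm l m) y)) * neg_one_zpow_mul_self (α := ℝ) m

lemma two_mul_sq_deriv_Ulm_add_eq (l : ℕ) {m : ℤ} (hm : |m| ≤ l) {y : ℝ}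
    (hy : y ∈ Set.Ioo (-1 : ℝ) 1) :
    2 * ((1 - y ^ 2) * deriv (Ulm l m) y ^ 2 + m ^ 2 * Ulm l m y ^ 2 / (1 - y ^ 2)) =
      (ladderCoeff l (m + 1) * Ulm l (m + 1) y) ^ 2 + (ladderCoeff l m * Ulm l (m - 1) y) ^ 2 +
        2 * m ^ 2 * Ulm l m y ^ 2 := by
  have hs := one_sub_sq_pos hy
  have hrr : √(1 - y ^ 2) ^ 2 = 1 - y ^ 2 := sq_sqrt hs.le
  rw [ladderCoeff_mul_Ulm_succ l hm hy, ladderCoeff_mul_Ulm_pred l hm hy]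
  field_simp
  rw [hrr]
  ring

lemma sum_sq_ladderCoeff_mul_Ulm (l : ℕ) (y : ℝ) :
    ∑ m ∈ Icc (-(l : ℤ)) l,
      ((ladderCoeff l (m + 1) * Ulm l (m + 1) y) ^ 2 + (ladderCoeff l m * Ulm l (m - 1) y) ^ 2) =
      ∑ m ∈ Icc (-(l : ℤ)) l, 2 * (l * (l + 1) - m ^ 2) * Ulm l m y ^ 2 := by
  have hup : ∑ m ∈ Icc (-(l : ℤ)) l, (ladderCoeff l (m + 1) * Ulm l (m + 1) y) ^ 2 =
      ∑ m ∈ Icc (-(l : ℤ)) l, ((l : ℝ) - m + 1) * (l + m) * Ulm l m y ^ 2 := by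
    rw [← sum_Icc_comp_add_one (fun j : ℤ => ((l : ℝ) - j + 1) * (l + j) * Ulm l j y ^ 2)
      (by omega) (by simp) (by push_cast; ring)]
    refine sum_congr rfl fun m hm => ?_
    obtain ⟨h₁, h₂⟩ := mem_Icc.mp hm
    rw [mul_pow, ladderCoeff_sq l (by omega) (by omega)]
    push_cast; ring
  have hdown : ∑ m ∈ Icc (-(l : ℤ)) l, (ladderCoeff l m * Ulm l (m - 1) y) ^ 2 =
      ∑ m ∈ Icc (-(l : ℤ)) l, ((l : ℝ) + m + 1) * (l - m) * Ulm l m y ^ 2 := by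
    rw [← sum_Icc_comp_sub_one (fun j : ℤ => ((l : ℝ) + j + 1) * (l - j) * Ulm l j y ^ 2)
      (by omega) (by push_cast; ring) (by simp)]
    refine sum_congr rfl fun m hm => ?_
    obtain ⟨h₁, h₂⟩ := mem_Icc.mp hm
    rw [mul_pow, ladderCoeff_sq l (by omega) (by omega)]
    push_cast; ring
  rw [sum_add_distrib, hup, hdown, ← sum_add_distrib]
  exact sum_congr rfl fun m _ => by ring

lemma sum_sq_deriv_Ulm_add_eq (l : ℕ) {y : ℝ} (hy : y ∈ Set.Ioo (-1 : ℝ) 1) :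
    ∑ m ∈ Icc (-(l : ℤ)) l,
      ((1 - y ^ 2) * deriv (Ulm l m) y ^ 2 + m ^ 2 * Ulm l m y ^ 2 / (1 - y ^ 2)) =
      l * (l + 1) * ∑ m ∈ Icc (-(l : ℤ)) l, Ulm l m y ^ 2 := by
  apply mul_left_cancel₀ (two_ne_zero (α := ℝ))
  rw [mul_sum,
    sum_congr rfl fun m hm => two_mul_sq_deriv_Ulm_add_eq l (abs_le.mpr (mem_Icc.mp hm)) hy,
    sum_add_distrib, sum_sq_ladderCoeff_mul_Ulm, ← sum_add_distrib, mul_sum, mul_sum]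
  exact sum_congr rfl fun m _ => by ring

lemma mul_Flm_sq (l : ℕ) (hl : l ≠ 0) (m : ℤ) {y : ℝ} (hy : y ∈ Set.Ioo (-1 : ℝ) 1) :
    l * (l + 1) * Flm l m y ^ 2 =
      (1 - y ^ 2) * deriv (Ulm l m) y ^ 2 + m ^ 2 * Ulm l m y ^ 2 / (1 - y ^ 2) -
        2 * (m * Ulm l m y * deriv (Ulm l m) y) := by
  have hs := one_sub_sq_pos hy
  rw [Flm, mul_pow, div_pow, one_pow, sq_sqrt (by push_cast; positivity)]
  push_cast
  field_simp
  rw [sq_sqrt hs.le]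
  ring

/-- Addition theorem for `F_{lm}`: `∑_{m=−l}^{l} F_{lm}(x)² = (2l+1)/2`. -/
theorem Flm_addition_theorem (l : ℤ) (hl : 1 ≤ l) (x : ℝ)
    (hx : x ∈ Set.Ioo (-1 : ℝ) 1) :
    ∑ m ∈ Finset.Icc (-l) l, (Flm l m x) ^ 2 = (2 * (l : ℝ) + 1) / 2 := by
  lift l to ℕ using by omega
  have hN : (0 : ℝ) < l * (l + 1) := by
    have : (1 : ℝ) ≤ l := by exact_mod_cast hl
    positivity
  apply mul_left_cancel₀ hN.ne'
  rw [Int.cast_natCast, mul_sum, sum_congr rfl fun m _ => mul_Flm_sq l (by omega) m hx,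
    sum_sub_distrib, sum_sq_deriv_Ulm_add_eq l hx, ← mul_sum, sum_mul_Ulm_mul_deriv_Ulm l hx,
    sum_Ulm_sq l hx, mul_zero, sub_zero]
end
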